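/- Suppose F is strictly convex. For x, y ∈ X with x ≠ 0 and y ≠ 0, one has ρ_F(x + y) = ρ_F(x) + ρ_F(y) if and only if there exists λ > 0 such that x = λ•y. -/
import Mathlib


open Set Pointwise Filter Topology Bornology Function

variable {X : Type*} [NormedAddCommGroup X] [NormedSpace ℝ X]

/-- The Minkowski gauge of `F`: `ρ_F(x) = inf {t ≥ 0 : x ∈ t • F}`. -/
noncomputable def rhoF (F : Set X) (x : X) : ℝ :=
  sInf {t : ℝ | 0 ≤ t ∧ x ∈ t • F}

/-- The maximal time function `C_F(x; Q) = sup {ρ_F(q - x) : q ∈ Q}`. -/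
noncomputable def maxTime (F Q : Set X) (x : X) : ℝ :=
  sSup ((fun q => rhoF F (q - x)) '' Q)

/-- The minimal time function `T_F(x; Θ) = inf {ρ_F(q - x) : q ∈ Θ}`. -/
noncomputable def minTime (F Θ : Set X) (x : X) : ℝ :=
  sInf ((fun q => rhoF F (q - x)) '' Θ)

lemma rhoF_eq_gauge (F : Set X) (h0 : (0 : X) ∈ F) (z : X) : rhoF F z = gauge F z := by
  rcases eq_or_ne z 0 with rfl | hz
  · rw [gauge_zero]
    refine le_antisymm (csInf_le ⟨0, fun t ht => ht.1⟩ ⟨le_refl 0, ?_⟩)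
      (le_csInf ⟨1, zero_le_one, ⟨0, h0, by simp⟩⟩ fun t ht => ht.1)
    exact ⟨0, h0, by simp⟩
  · unfold rhoF gauge
    congr 1
    ext t
    simp only [mem_setOf_eq, and_congr_left_iff]
    intro htF
    constructor
    · rintro ht
      rcases ht.lt_or_eq with h | rfl
      · exact h
      · exfalso
        rw [zero_smul_set ⟨0, h0⟩] at htF
        exact hz (by simpa using htF)
    · exact le_of_lt

lemma gauge_pos_of_ne_zero (F : Set X) (hFb : IsBounded F) (hF0 : (0 : X) ∈ interior F)
    {z : X} (hz : z ≠ 0) : 0 < gauge F z := by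
  obtain ⟨r, hFr⟩ := hFb.subset_closedBall 0
  have hr : (0 : ℝ) < max r 1 := lt_max_of_lt_right one_pos
  have habs : Absorbent ℝ F := absorbent_nhds_zero (mem_interior_iff_mem_nhds.1 hF0)
  have := le_gauge_of_subset_closedBall (x := z) habs hr.le
    (hFr.trans (Metric.closedBall_subset_closedBall (le_max_left r 1)))
  exact lt_of_lt_of_le (div_pos (norm_pos_iff.2 hz) hr) this

/-- Lemma 3.9. -/
theorem stmt14 (F : Set X)
    (hFc : IsClosed F) (hFb : IsBounded F) (hFconv : Convex ℝ F)
    (hF0 : (0 : X) ∈ interior F) (hFs : StrictConvex ℝ F)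
    (x y : X) (hx : x ≠ 0) (hy : y ≠ 0) :
    rhoF F (x + y) = rhoF F x + rhoF F y ↔ ∃ lam : ℝ, 0 < lam ∧ x = lam • y := by
  have h0F : (0 : X) ∈ F := interior_subset hF0
  have hnhds : F ∈ 𝓝 (0 : X) := mem_interior_iff_mem_nhds.1 hF0
  have habs : Absorbent ℝ F := absorbent_nhds_zero hnhds
  rw [rhoF_eq_gauge F h0F, rhoF_eq_gauge F h0F, rhoF_eq_gauge F h0F]
  have ha : 0 < gauge F x := gauge_pos_of_ne_zero F hFb hF0 hx
  have hb : 0 < gauge F y := gauge_pos_of_ne_zero F hFb hF0 hy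
  set a := gauge F x with ha_def
  set b := gauge F y with hb_def
  constructor
  · intro h
    have hab : (0 : ℝ) < a + b := by positivity
    set u := a⁻¹ • x with hu_def
    set v := b⁻¹ • y with hv_def
    have hgu : gauge F u = 1 := by
      rw [hu_def, gauge_smul_of_nonneg (by positivity), smul_eq_mul, inv_mul_cancel₀ ha.ne']
    have hgv : gauge F v = 1 := by
      rw [hv_def, gauge_smul_of_nonneg (by positivity), smul_eq_mul, inv_mul_cancel₀ hb.ne']
    have huF : u ∈ F := by
      rw [← hFc.closure_eq]
      exact (gauge_le_one_iff_mem_closure hFconv hnhds).1 hgu.le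
    have hvF : v ∈ F := by
      rw [← hFc.closure_eq]
      exact (gauge_le_one_iff_mem_closure hFconv hnhds).1 hgv.le
    have hcomb : (a / (a + b)) • u + (b / (a + b)) • v = (a + b)⁻¹ • (x + y) := by
      rw [hu_def, hv_def, smul_smul, smul_smul, smul_add]
      congr 1 <;> congr 1 <;> field_simp <;> ring
    have hgcomb : gauge F ((a + b)⁻¹ • (x + y)) = 1 := by
      rw [gauge_smul_of_nonneg (by positivity), smul_eq_mul, h, inv_mul_cancel₀ hab.ne']
    have huv : u = v := by
      by_contra hne
      have hmem : (a / (a + b)) • u + (b / (a + b)) • v ∈ interior F :=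
        hFs huF hvF hne (by positivity) (by positivity) (by field_simp)
      have := (gauge_lt_one_iff_mem_interior hFconv hnhds).2 (hcomb ▸ hmem)
      rw [hgcomb] at this
      exact lt_irrefl 1 this
    refine ⟨a / b, by positivity, ?_⟩
    have : a • u = a • v := by rw [huv]
    rw [hu_def, hv_def, smul_smul, smul_smul, mul_inv_cancel₀ ha.ne', one_smul] at this
    rw [this, div_eq_mul_inv, mul_comm, mul_smul]
  · rintro ⟨lam, hlam, rfl⟩
    have h1 : lam • y + y = (lam + 1) • y := by rw [add_smul, one_smul]
    rw [h1, ha_def, gauge_smul_of_nonneg hlam.le, gauge_smul_of_nonneg (by positivity),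
      smul_eq_mul, smul_eq_mul]
    ring
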